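/- arXiv:1010.1024 — 5 statements merged into one kernel-verified Lean document; each statement's English description precedes it below -/
import Mathlib

section
/- Let k ≤ r and let M be a (2r, v, n)-super-selector where v_i = i for i ≤ k, v_i = k for k+1 ≤ i ≤ 2r−1, and v_{2r} = r+1. Then the family of subsets of [m] whose indicator vectors are the columns of M is a k-out-of-r multi-user tracing family: from the Boolean OR of any ℓ ≤ r columns one can identify at least k of them (and all of them if ℓ < k). -/
open Finset

/-- `c` has a "private" identity row within the column set `S`:
some row where column `c` has a `1` and every other column of `S` has a `0`. -/
def HasIdRow {m n : ℕ} (M : Fin m → Fin n → Bool) (S : Finset (Fin n)) (c : Fin n) : Prop :=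
  ∃ i : Fin m, M i c = true ∧ ∀ c' ∈ S, c' ≠ c → M i c' = false

instance {m n : ℕ} (M : Fin m → Fin n → Bool) (S : Finset (Fin n)) :
    DecidablePred (HasIdRow M S) := fun c => by unfold HasIdRow; infer_instance

/-- A `(p, k, n)`-selector: every `p` columns induce a submatrix containing
at least `k` distinct rows of the identity matrix `I_p`. -/
def IsSelector {m n : ℕ} (M : Fin m → Fin n → Bool) (p k : ℕ) : Prop :=
  ∀ S : Finset (Fin n), S.card = p → k ≤ (S.filter (HasIdRow M S)).card

/-- A `(p, v, n)`-super-selector: an `(i, v i, n)`-selector for each `i = 1, …, p`. -/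
def IsSuperSelector {m n : ℕ} (M : Fin m → Fin n → Bool) (p : ℕ) (v : ℕ → ℕ) : Prop :=
  ∀ j : ℕ, 1 ≤ j → j ≤ p → IsSelector M j (v j)

/-- The componentwise Boolean OR of the columns of `M` indexed by `S`. -/
noncomputable def orCols {m n : ℕ} (M : Fin m → Fin n → Bool) (S : Finset (Fin n)) (i : Fin m) : Bool :=
  S.sup (fun c => M i c)

/-- Column `c` is covered by the Boolean vector `a`. -/
def Covered {m n : ℕ} (M : Fin m → Fin n → Bool) (a : Fin m → Bool) (c : Fin n) : Prop :=
  ∀ i : Fin m, M i c = true → a i = true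

instance {m n : ℕ} (M : Fin m → Fin n → Bool) (a : Fin m → Bool) :
    DecidablePred (Covered M a) := fun c => by unfold Covered; infer_instance

/-- for `k ≤ r`, a `(2r, v, n)`-super-selector with `v_i = i` for `i ≤ k`,
`v_i = k` for `k+1 ≤ i ≤ 2r-1` and `v_{2r} = r+1` yields a `k`-out-of-`r` multi-user
tracing family: from the OR of any `ℓ ≤ r` columns, at least `k` of them are
identifiable (all of them if `ℓ < k`). A column of `S` is identifiable if it has a `1`
in a row where every other column of `M` covered by `a_S` has a `0`. -/
theorem stmt4 {m n r k : ℕ} (hk : k ≤ r) (hr : 1 ≤ r) (h2rn : 2 * r ≤ n)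
    (v : ℕ → ℕ)
    (hvlow : ∀ i : ℕ, i ≤ k → v i = i)
    (hvmid : ∀ i : ℕ, k + 1 ≤ i → i ≤ 2 * r - 1 → v i = k)
    (hvtop : v (2 * r) = r + 1)
    (M : Fin m → Fin n → Bool) (hM : IsSuperSelector M (2 * r) v)
    (S : Finset (Fin n)) (hS : S.card ≤ r) :
    letI cov : Finset (Fin n) := Finset.univ.filter (Covered M (orCols M S))
    letI ident : Finset (Fin n) :=
      S.filter (fun c => ∃ i : Fin m, M i c = true ∧ ∀ c' ∈ cov, c' ≠ c → M i c' = false)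
    (k ≤ S.card → k ≤ ident.card) ∧ (S.card < k → ident = S) := by
  classical
  set cov : Finset (Fin n) := Finset.univ.filter (Covered M (orCols M S)) with hcovdef
  set ident : Finset (Fin n) :=
    S.filter (fun c => ∃ i : Fin m, M i c = true ∧ ∀ c' ∈ cov, c' ≠ c → M i c' = false)
    with hidentdef
  -- S is contained in cov
  have hSsubcov : S ⊆ cov := by
    intro c hc
    simp only [cov, Finset.mem_filter, Finset.mem_univ, true_and]
    intro i hi
    have h1 : M i c ≤ orCols M S i := Finset.le_sup (f := fun c' => M i c') hc
    exact Bool.le_iff_imp.mp h1 hi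
  -- key: identifiable columns within a T between S and cov lie in S
  have key : ∀ T : Finset (Fin n), S ⊆ T → T ⊆ cov →
      T.filter (HasIdRow M T) ⊆ S := by
    intro T hST hTcov c hc
    rw [Finset.mem_filter] at hc
    obtain ⟨hcT, i, hic, hrow⟩ := hc
    by_contra hcS
    have hccov : Covered M (orCols M S) c := by
      have := hTcov hcT
      simpa [cov, Covered] using this
    have hsup : orCols M S i = true := hccov i hic
    have hbot : orCols M S i = false := by
      unfold orCols
      rw [show (false : Bool) = ⊥ from rfl, Finset.sup_eq_bot_iff]
      intro c' hc'
      have hne : c' ≠ c := by rintro rfl; exact hcS hc'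
      exact hrow c' (hST hc') hne
    rw [hsup] at hbot; exact Bool.true_eq_false.mp hbot
  -- cov has fewer than 2r elements
  have hcovlt : cov.card < 2 * r := by
    by_contra hcon
    push_neg at hcon
    obtain ⟨T, hST, hTcov, hTcard⟩ :=
      Finset.exists_subsuperset_card_eq hSsubcov (by omega) hcon
    have hsel := hM (2 * r) (by omega) le_rfl T hTcard
    rw [hvtop] at hsel
    have := Finset.card_le_card (key T hST hTcov)
    omega
  have hidsub : ident ⊆ S := Finset.filter_subset _ _
  rcases S.eq_empty_or_nonempty with hSe | hSne
  · constructor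
    · intro hks
      have : k = 0 := by rw [hSe] at hks; simpa using hks
      omega
    · intro _
      have : ident = ∅ := Finset.subset_empty.mp (hSe ▸ hidsub)
      rw [this, hSe]
  · have hcov1 : 1 ≤ cov.card := by
      have := Finset.card_le_card hSsubcov
      have := Finset.card_pos.mpr hSne
      omega
    have hF := hM cov.card hcov1 (by omega) cov rfl
    have hFS : cov.filter (HasIdRow M cov) ⊆ S := key cov hSsubcov Finset.Subset.rfl
    have hFid : cov.filter (HasIdRow M cov) ⊆ ident := by
      intro c hc
      have hcS := hFS hc
      rw [Finset.mem_filter] at hc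
      rw [Finset.mem_filter]
      exact ⟨hcS, hc.2⟩
    rcases le_or_gt (k + 1) cov.card with hkc | hkc
    · have hvk := hvmid cov.card hkc (by omega)
      rw [hvk] at hF
      have hkid : k ≤ ident.card := le_trans hF (Finset.card_le_card hFid)
      refine ⟨fun _ => hkid, fun hlt => ?_⟩
      have := Finset.card_le_card hidsub
      omega
    · have hvk := hvlow cov.card (by omega)
      rw [hvk] at hF
      have hFcov : cov.filter (HasIdRow M cov) = cov :=
        Finset.eq_of_subset_of_card_le (Finset.filter_subset _ _) hF
      have hcovS : cov ⊆ S := hFcov ▸ hFS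
      have hident : ident = S := by
        apply Finset.Subset.antisymm hidsub
        intro c hc
        refine hFid ?_
        rw [hFcov]
        exact hSsubcov hc
      constructor
      · intro hks; rw [hident]; exact hks
      · intro _; exact hident
end

section
/- Fix an integer p > 1 and let x = (p−1)/p. Then (log₂(1/(1 − (p/2 + 1)·x^{p−1}·(1−x))))^{−1} ≤ 3.411. -/
/-!
With `x = 1 - 1/p` the argument of the logarithm is `1/(1 - t)` for
`t = (1/2 + 1/p) (1 - 1/p)^(p-1)`, and `(1 + 1/(p-1))^(p-1) ≤ e` gives `1/(2e) ≤ t < 1`.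
The bound is tight: it then follows from the first five terms of `-log (1 - t) = ∑ tᵏ/k`
evaluated at `0.18393 < 1/(2e)`, which exceed `log 2 / 3.411` by about `4·10⁻⁵`.
-/

open Real

open Finset in
lemma Real.sum_range_pow_div_le_neg_log_one_sub {x : ℝ} (hx₀ : 0 ≤ x) (hx₁ : x < 1) (n : ℕ) :
    ∑ i ∈ range n, x ^ (i + 1) / (i + 1) ≤ -log (1 - x) :=
  sum_le_hasSum _ (fun _ _ ↦ by positivity)
    (hasSum_pow_div_log_of_abs_lt_one (by rwa [abs_of_nonneg hx₀]))

lemma Real.exp_neg_one_le_one_sub_inv_pow (n : ℕ) : exp (-1) ≤ (1 - ((n : ℝ) + 1)⁻¹) ^ n := by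
  rcases n.eq_zero_or_pos with rfl | hn
  · simp
  have h : 1 - ((n : ℝ) + 1)⁻¹ = (1 + (n : ℝ)⁻¹)⁻¹ := by field_simp; ring
  rw [h, inv_pow, exp_neg]
  exact inv_anti₀ (by positivity) one_add_inv_pow_le_exp

lemma exp_neg_one_div_two_le_half_add_inv_mul_pow (n : ℕ) :
    exp (-1) / 2 ≤ (1 / 2 + ((n : ℝ) + 1)⁻¹) * (1 - ((n : ℝ) + 1)⁻¹) ^ n := by
  have hy := exp_neg_one_le_one_sub_inv_pow n
  calc exp (-1) / 2 ≤ 1 / 2 * (1 - ((n : ℝ) + 1)⁻¹) ^ n := by linarith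
    _ ≤ _ := mul_le_mul_of_nonneg_right (le_add_of_nonneg_right (by positivity))
        ((exp_pos _).le.trans hy)

lemma half_add_inv_mul_pow_lt_one {n : ℕ} (hn : n ≠ 0) :
    (1 / 2 + ((n : ℝ) + 1)⁻¹) * (1 - ((n : ℝ) + 1)⁻¹) ^ n < 1 := by
  have hn₁ : (1 : ℝ) ≤ n := by exact_mod_cast Nat.one_le_iff_ne_zero.mpr hn
  have hinv : ((n : ℝ) + 1)⁻¹ ≤ 1 / 2 := by
    rw [inv_le_comm₀ (by positivity) (by norm_num)]
    linarith
  have hbase : 0 ≤ 1 - ((n : ℝ) + 1)⁻¹ := by linarith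
  exact mul_lt_one_of_nonneg_of_lt_one_right (by linarith) (pow_nonneg hbase n)
    (pow_lt_one₀ hbase (by simp only [sub_lt_self_iff]; positivity) hn)

lemma log_two_div_le_neg_log_one_sub {t : ℝ} (ht₀ : exp (-1) / 2 ≤ t) (ht₁ : t < 1) :
    log 2 / 3.411 ≤ -log (1 - t) := by
  have he : (2.7182818286 : ℝ)⁻¹ < exp (-1) := by
    rw [exp_neg]
    exact inv_strictAnti₀ (exp_pos 1) exp_one_lt_d9
  have hc : (0.18393 : ℝ) ≤ t := by
    linarith [(by norm_num : (0.18393 : ℝ) ≤ (2.7182818286 : ℝ)⁻¹ / 2)]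
  calc log 2 / 3.411 ≤ 0.6931471808 / 3.411 := by gcongr; exact log_two_lt_d9.le
    _ ≤ ∑ i ∈ Finset.range 5, (0.18393 : ℝ) ^ (i + 1) / (i + 1) := by
      simp only [Finset.sum_range_succ, Finset.sum_range_zero]
      norm_num
    _ ≤ -log (1 - 0.18393) := sum_range_pow_div_le_neg_log_one_sub (by norm_num) (by norm_num) 5
    _ ≤ -log (1 - t) := by gcongr

lemma inv_logb_two_one_div_one_sub_le {t : ℝ} (ht₀ : exp (-1) / 2 ≤ t) (ht₁ : t < 1) :
    (logb 2 (1 / (1 - t)))⁻¹ ≤ 3.411 := by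
  have hlog : 0 < -log (1 - t) := by
    have : 0 < t := lt_of_lt_of_le (by positivity) ht₀
    linarith [log_neg (by linarith : 0 < 1 - t) (by linarith)]
  have h := log_two_div_le_neg_log_one_sub ht₀ ht₁
  rw [div_le_iff₀ (by norm_num)] at h
  rw [logb, one_div, log_inv, inv_div, div_le_iff₀ hlog]
  linarith

/-- for an integer `p > 1` and `x = (p-1)/p`,
`(log₂(1/(1 - (p/2 + 1) x^{p-1}(1-x))))⁻¹ ≤ 3.411`. -/
theorem stmt8 (p : ℕ) (hp : 1 < p) :
    letI x : ℝ := ((p : ℝ) - 1) / p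
    (Real.logb 2 (1 / (1 - ((p : ℝ) / 2 + 1) * x ^ (p - 1) * (1 - x))))⁻¹ ≤ 3.411 := by
  obtain ⟨n, rfl⟩ : ∃ n, p = n + 1 := ⟨p - 1, by omega⟩
  have hx : (((n + 1 : ℕ) : ℝ) - 1) / (n + 1 : ℕ) = 1 - ((n : ℝ) + 1)⁻¹ := by
    push_cast
    field_simp
  have ht : ((n + 1 : ℕ) / 2 + 1) * (1 - ((n : ℝ) + 1)⁻¹) ^ n * (1 - (1 - ((n : ℝ) + 1)⁻¹))
      = (1 / 2 + ((n : ℝ) + 1)⁻¹) * (1 - ((n : ℝ) + 1)⁻¹) ^ n := by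
    push_cast
    field_simp
    ring
  simp only [hx, Nat.add_sub_cancel, ht]
  exact inv_logb_two_one_div_one_sub_le (exp_neg_one_div_two_le_half_add_inv_mul_pow n)
    (half_add_inv_mul_pow_lt_one (by omega))
end

section
/- Fix integers 1 ≤ k ≤ p ≤ n and m ≥ 1. Generate an m×n random binary matrix M with each entry independently 0 with probability x = (p−1)/p. Then the probability that M is a (p, k, n)-selector is at least 1 − C(n,p)·C(p, p−k+1)·(1 − (p−k+1)·x^{p−1}·(1−x))^m. -/
open Finset

/-- The probability of the binary matrix `M` when each entry is independently `0`
with probability `x` (and `1` with probability `1 - x`). -/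
noncomputable def matWeight {m n : ℕ} (x : ℝ) (M : Fin m → Fin n → Bool) : ℝ :=
  x ^ (Finset.univ.filter (fun q : Fin m × Fin n => M q.1 q.2 = false)).card *
    (1 - x) ^ (Finset.univ.filter (fun q : Fin m × Fin n => M q.1 q.2 = true)).card

instance {m n : ℕ} (p k : ℕ) :
    DecidablePred (fun M : Fin m → Fin n → Bool => IsSelector M p k) := fun M => by
  unfold IsSelector; infer_instance


section Aux

variable {m n : ℕ}

noncomputable def rowW (x : ℝ) {n : ℕ} (r : Fin n → Bool) : ℝ :=
  ∏ c, (if r c = true then 1 - x else x)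

lemma rowW_nonneg {x : ℝ} (hx0 : 0 ≤ x) (hx1 : x ≤ 1) (r : Fin n → Bool) :
    0 ≤ rowW x r :=
  Finset.prod_nonneg fun c _ => by by_cases h : r c = true <;> simp [h] <;> linarith

lemma matWeight_eq_prod (x : ℝ) (M : Fin m → Fin n → Bool) :
    matWeight x M = ∏ i, rowW x (M i) := by
  unfold matWeight rowW
  have : (∏ i, ∏ c, (if M i c = true then 1 - x else x))
      = ∏ q : Fin m × Fin n, (if M q.1 q.2 = true then 1 - x else x) := by
    rw [Fintype.prod_prod_type]
  rw [this, Finset.prod_ite, Finset.prod_const, Finset.prod_const, mul_comm]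
  have hfe : (univ.filter fun q : Fin m × Fin n => ¬ M q.1 q.2 = true)
      = univ.filter fun q : Fin m × Fin n => M q.1 q.2 = false := by
    ext q; simp
  rw [hfe]

lemma matWeight_nonneg {x : ℝ} (hx0 : 0 ≤ x) (hx1 : x ≤ 1) (M : Fin m → Fin n → Bool) :
    0 ≤ matWeight x M := by
  rw [matWeight_eq_prod]
  exact Finset.prod_nonneg fun i _ => rowW_nonneg hx0 hx1 _

lemma sum_rowW (x : ℝ) : ∑ r : Fin n → Bool, rowW x r = 1 := by
  unfold rowW
  rw [← Fintype.piFinset_univ,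
    Finset.sum_prod_piFinset univ (fun (_ : Fin n) (b : Bool) => if b = true then 1 - x else x)]
  simp

lemma sum_matWeight (x : ℝ) : ∑ M : Fin m → Fin n → Bool, matWeight x M = 1 := by
  rw [Finset.sum_congr rfl fun M _ => matWeight_eq_prod x M,
    ← Fintype.piFinset_univ,
    Finset.sum_prod_piFinset univ (fun (_ : Fin m) (r : Fin n → Bool) => rowW x r)]
  simp [sum_rowW]

lemma sum_idrow (x : ℝ) {S : Finset (Fin n)} {c : Fin n} (hc : c ∈ S) :
    ∑ r ∈ univ.filter (fun r : Fin n → Bool =>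
        r c = true ∧ ∀ c' ∈ S, c' ≠ c → r c' = false), rowW x r
      = x ^ (S.card - 1) * (1 - x) := by
  classical
  have hset : univ.filter (fun r : Fin n → Bool =>
      r c = true ∧ ∀ c' ∈ S, c' ≠ c → r c' = false) =
      Fintype.piFinset (fun c' => if c' = c then ({true} : Finset Bool)
        else if c' ∈ S then {false} else univ) := by
    ext r
    simp only [mem_filter, mem_univ, true_and, Fintype.mem_piFinset]
    constructor
    · rintro ⟨h1, h2⟩ c'
      by_cases hcc : c' = c
      · subst hcc; simp [h1]
      · by_cases hcS : c' ∈ S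
        · simp [hcc, hcS, h2 c' hcS hcc]
        · simp [hcc, hcS]
    · intro h
      refine ⟨by simpa using h c, fun c' hcS hcc => ?_⟩
      have := h c'; simp [hcc, hcS] at this; exact this
  rw [hset]
  unfold rowW
  rw [← Finset.prod_univ_sum
    (fun c' => if c' = c then ({true} : Finset Bool) else if c' ∈ S then {false} else univ)
    (fun (_ : Fin n) (b : Bool) => if b = true then 1 - x else x)]
  have hterm : ∀ c' : Fin n,
      (∑ b ∈ (if c' = c then ({true} : Finset Bool) else if c' ∈ S then {false} else univ),
        (if b = true then 1 - x else x))
      = if c' = c then 1 - x else if c' ∈ S then x else 1 := by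
    intro c'
    by_cases h1 : c' = c <;> by_cases h2 : c' ∈ S <;> simp [h1, h2] <;> ring
  rw [Finset.prod_congr rfl fun c' _ => hterm c']
  rw [← Finset.prod_subset (Finset.subset_univ S)
    (by
      intro a _ haS
      have hac : a ≠ c := fun h => haS (h ▸ hc)
      simp [haS, hac])]
  rw [← Finset.mul_prod_erase S _ hc, if_pos rfl]
  rw [Finset.prod_congr rfl (fun a ha => ?_), Finset.prod_const,
    Finset.card_erase_of_mem hc, mul_comm]
  have := Finset.ne_of_mem_erase ha
  simp [this, Finset.mem_of_mem_erase ha]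

lemma sum_rowBad (x : ℝ) {S R : Finset (Fin n)} (hRS : R ⊆ S) :
    ∑ r ∈ univ.filter (fun r : Fin n → Bool =>
        ∀ c ∈ R, ¬(r c = true ∧ ∀ c' ∈ S, c' ≠ c → r c' = false)), rowW x r
      = 1 - R.card * (x ^ (S.card - 1) * (1 - x)) := by
  classical
  have hsplit := Finset.sum_filter_add_sum_filter_not Finset.univ
    (fun r : Fin n → Bool => ∃ c ∈ R, r c = true ∧ ∀ c' ∈ S, c' ≠ c → r c' = false)
    (rowW x)
  have hnot : univ.filter (fun r : Fin n → Bool =>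
      ¬ ∃ c ∈ R, r c = true ∧ ∀ c' ∈ S, c' ≠ c → r c' = false)
      = univ.filter (fun r : Fin n → Bool =>
        ∀ c ∈ R, ¬(r c = true ∧ ∀ c' ∈ S, c' ≠ c → r c' = false)) := by
    ext r; simp
  have hgood : univ.filter (fun r : Fin n → Bool =>
      ∃ c ∈ R, r c = true ∧ ∀ c' ∈ S, c' ≠ c → r c' = false)
      = R.biUnion (fun c => univ.filter (fun r : Fin n → Bool =>
          r c = true ∧ ∀ c' ∈ S, c' ≠ c → r c' = false)) := by
    ext r; simp
  have hdisj : ∀ c1 ∈ (R : Set (Fin n)), ∀ c2 ∈ (R : Set (Fin n)), c1 ≠ c2 →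
      Disjoint (univ.filter (fun r : Fin n → Bool =>
          r c1 = true ∧ ∀ c' ∈ S, c' ≠ c1 → r c' = false))
        (univ.filter (fun r : Fin n → Bool =>
          r c2 = true ∧ ∀ c' ∈ S, c' ≠ c2 → r c' = false)) := by
    intro c1 h1 c2 h2 hne
    rw [Finset.disjoint_left]
    intro r hr1 hr2
    simp only [mem_filter, mem_univ, true_and] at hr1 hr2
    have := hr2.2 c1 (hRS h1) hne
    rw [hr1.1] at this; exact Bool.true_eq_false.mp this
  have hgsum : ∑ r ∈ univ.filter (fun r : Fin n → Bool =>
      ∃ c ∈ R, r c = true ∧ ∀ c' ∈ S, c' ≠ c → r c' = false), rowW x r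
      = R.card * (x ^ (S.card - 1) * (1 - x)) := by
    rw [hgood, Finset.sum_biUnion hdisj]
    rw [Finset.sum_congr rfl fun c hc => sum_idrow x (hRS hc)]
    rw [Finset.sum_const, nsmul_eq_mul]
  rw [hnot, hgsum] at hsplit
  have htot : ∑ r : Fin n → Bool, rowW x r = 1 := sum_rowW x
  linarith [hsplit]

lemma sum_bad_event (x : ℝ) {S R : Finset (Fin n)} (hRS : R ⊆ S) :
    ∑ M ∈ univ.filter (fun M : Fin m → Fin n → Bool =>
        ∀ i, ∀ c ∈ R, ¬(M i c = true ∧ ∀ c' ∈ S, c' ≠ c → M i c' = false)),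
      matWeight x M
      = (1 - R.card * (x ^ (S.card - 1) * (1 - x))) ^ m := by
  classical
  rw [Finset.sum_congr rfl fun M _ => matWeight_eq_prod x M]
  have hset : univ.filter (fun M : Fin m → Fin n → Bool =>
      ∀ i, ∀ c ∈ R, ¬(M i c = true ∧ ∀ c' ∈ S, c' ≠ c → M i c' = false))
      = Fintype.piFinset (fun _ : Fin m => univ.filter (fun r : Fin n → Bool =>
          ∀ c ∈ R, ¬(r c = true ∧ ∀ c' ∈ S, c' ≠ c → r c' = false))) := by
    ext M; simp [Fintype.mem_piFinset]
  rw [hset,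
    Finset.sum_prod_piFinset
      (univ.filter (fun r : Fin n → Bool =>
        ∀ c ∈ R, ¬(r c = true ∧ ∀ c' ∈ S, c' ≠ c → r c' = false)))
      (fun (_ : Fin m) (r : Fin n → Bool) => rowW x r),
    Finset.prod_congr rfl fun _ _ => sum_rowBad x hRS,
    Finset.prod_const, Finset.card_univ, Fintype.card_fin]

lemma sum_biUnion_le_sum {α γ : Type*} [DecidableEq γ] (s : Finset α) (t : α → Finset γ)
    (f : γ → ℝ) (hf : ∀ y, 0 ≤ f y) :
    ∑ y ∈ s.biUnion t, f y ≤ ∑ a ∈ s, ∑ y ∈ t a, f y := by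
  classical
  induction s using Finset.induction with
  | empty => simp
  | @insert a s ha ih =>
    rw [Finset.biUnion_insert, Finset.sum_insert ha]
    have h1 : ∑ y ∈ t a ∪ s.biUnion t, f y ≤ ∑ y ∈ t a, f y + ∑ y ∈ s.biUnion t, f y := by
      have := Finset.sum_union_inter (s₁ := t a) (s₂ := s.biUnion t) (f := f)
      have h0 : 0 ≤ ∑ y ∈ t a ∩ s.biUnion t, f y := Finset.sum_nonneg fun y _ => hf y
      linarith
    linarith [ih]

end Aux

theorem stmt12 (m n p k : ℕ) (hk : 1 ≤ k) (hkp : k ≤ p) (hpn : p ≤ n) :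
    letI x : ℝ := ((p : ℝ) - 1) / p
    1 - (n.choose p : ℝ) * (p.choose (p - k + 1) : ℝ) *
        (1 - ((p : ℝ) - k + 1) * x ^ (p - 1) * (1 - x)) ^ m ≤
      ∑ M ∈ Finset.univ.filter (fun M : Fin m → Fin n → Bool => IsSelector M p k),
        matWeight (((p : ℝ) - 1) / p) M := by
  classical
  set x : ℝ := ((p : ℝ) - 1) / p with hxdef
  show 1 - (n.choose p : ℝ) * (p.choose (p - k + 1) : ℝ) *
        (1 - ((p : ℝ) - k + 1) * x ^ (p - 1) * (1 - x)) ^ m ≤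
      ∑ M ∈ Finset.univ.filter (fun M : Fin m → Fin n → Bool => IsSelector M p k),
        matWeight x M
  have hp1 : 1 ≤ p := le_trans hk hkp
  have hpR : (1 : ℝ) ≤ (p : ℝ) := by exact_mod_cast hp1
  have hx0 : 0 ≤ x := by
    apply div_nonneg <;> linarith
  have hx1 : x ≤ 1 := by
    rw [hxdef, div_le_one (by linarith)]; linarith
  -- the index set for the union bound
  set T : Finset ((_ : Finset (Fin n)) × Finset (Fin n)) :=
    (Finset.univ.powersetCard p).sigma (fun S => S.powersetCard (p - k + 1)) with hT
  have hcast : ((p - k + 1 : ℕ) : ℝ) = (p : ℝ) - k + 1 := by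
    push_cast [Nat.cast_sub hkp]; ring
  -- the bad event sum for each pair
  have hbad : ∀ t ∈ T,
      ∑ M ∈ univ.filter (fun M : Fin m → Fin n → Bool =>
          ∀ i, ∀ c ∈ t.2, ¬(M i c = true ∧ ∀ c' ∈ t.1, c' ≠ c → M i c' = false)),
        matWeight x M
      = (1 - ((p : ℝ) - k + 1) * x ^ (p - 1) * (1 - x)) ^ m := by
    intro t ht
    rw [hT, Finset.mem_sigma, Finset.mem_powersetCard_univ, Finset.mem_powersetCard] at ht
    obtain ⟨hS, hRsub, hRcard⟩ := ht
    rw [sum_bad_event x hRsub, hS, hRcard, hcast]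
    ring_nf
  -- failure set is covered by bad events
  have hsub : univ.filter (fun M : Fin m → Fin n → Bool => ¬ IsSelector M p k)
      ⊆ T.biUnion (fun t => univ.filter (fun M : Fin m → Fin n → Bool =>
          ∀ i, ∀ c ∈ t.2, ¬(M i c = true ∧ ∀ c' ∈ t.1, c' ≠ c → M i c' = false))) := by
    intro M hM
    rw [Finset.mem_filter] at hM
    have hM' := hM.2
    unfold IsSelector at hM'
    push_neg at hM'
    obtain ⟨S, hScard, hlt⟩ := hM'
    have hsub1 : S.filter (HasIdRow M S) ⊆ S := Finset.filter_subset _ _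
    have hdiffcard : p - k + 1 ≤ (S \ S.filter (HasIdRow M S)).card := by
      rw [Finset.card_sdiff_of_subset hsub1, hScard]
      have := Finset.card_le_card hsub1
      omega
    obtain ⟨R, hRsub, hRcard⟩ := Finset.exists_subset_card_eq hdiffcard
    rw [Finset.mem_biUnion]
    refine ⟨⟨S, R⟩, ?_, ?_⟩
    · rw [hT, Finset.mem_sigma, Finset.mem_powersetCard_univ, Finset.mem_powersetCard]
      exact ⟨hScard, hRsub.trans (Finset.sdiff_subset), hRcard⟩
    · rw [Finset.mem_filter]
      refine ⟨Finset.mem_univ _, fun i c hc => ?_⟩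
      have hcmem := hRsub hc
      rw [Finset.mem_sdiff, Finset.mem_filter] at hcmem
      intro hcontra
      exact (fun h => hcmem.2 ⟨hcmem.1, h⟩) ⟨i, hcontra.1, hcontra.2⟩
  -- union bound
  have hTcard : (T.card : ℝ) = (n.choose p : ℝ) * (p.choose (p - k + 1) : ℝ) := by
    rw [hT, Finset.card_sigma]
    have hterm : ∀ S ∈ (Finset.univ : Finset (Fin n)).powersetCard p,
        (S.powersetCard (p - k + 1)).card = p.choose (p - k + 1) := by
      intro S hS
      rw [Finset.mem_powersetCard_univ] at hS
      rw [Finset.card_powersetCard, hS]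
    rw [Finset.sum_congr rfl hterm, Finset.sum_const, Finset.card_powersetCard,
      Finset.card_univ, Fintype.card_fin, nsmul_eq_mul]
    push_cast; ring
  have hfail : ∑ M ∈ univ.filter (fun M : Fin m → Fin n → Bool => ¬ IsSelector M p k),
      matWeight x M
      ≤ (n.choose p : ℝ) * (p.choose (p - k + 1) : ℝ) *
        (1 - ((p : ℝ) - k + 1) * x ^ (p - 1) * (1 - x)) ^ m := by
    calc ∑ M ∈ univ.filter (fun M : Fin m → Fin n → Bool => ¬ IsSelector M p k),
          matWeight x M
        ≤ ∑ M ∈ T.biUnion (fun t => univ.filter (fun M : Fin m → Fin n → Bool =>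
            ∀ i, ∀ c ∈ t.2, ¬(M i c = true ∧ ∀ c' ∈ t.1, c' ≠ c → M i c' = false))),
          matWeight x M := by
          apply Finset.sum_le_sum_of_subset_of_nonneg hsub
          intro M _ _
          exact matWeight_nonneg hx0 hx1 M
      _ ≤ ∑ t ∈ T, ∑ M ∈ univ.filter (fun M : Fin m → Fin n → Bool =>
            ∀ i, ∀ c ∈ t.2, ¬(M i c = true ∧ ∀ c' ∈ t.1, c' ≠ c → M i c' = false)),
          matWeight x M :=
          sum_biUnion_le_sum T _ _ (matWeight_nonneg hx0 hx1)
      _ = ∑ t ∈ T, (1 - ((p : ℝ) - k + 1) * x ^ (p - 1) * (1 - x)) ^ m :=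
          Finset.sum_congr rfl hbad
      _ = (T.card : ℝ) * (1 - ((p : ℝ) - k + 1) * x ^ (p - 1) * (1 - x)) ^ m := by
          rw [Finset.sum_const, nsmul_eq_mul]
      _ = _ := by rw [hTcard]
  have htot := Finset.sum_filter_add_sum_filter_not
    (Finset.univ : Finset (Fin m → Fin n → Bool))
    (fun M => IsSelector M p k) (matWeight x)
  have h1 : ∑ M : Fin m → Fin n → Bool, matWeight x M = 1 := sum_matWeight x
  rw [h1] at htot
  linarith
end

section
/- There exists a (p, p, n)-selector (i.e., a (p−1)-superimposed code) of size m = (e·p²/log₂ e)·log₂(n/p)·(1+o(1)). -/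
/-!
Take an `m × n` matrix with independent uniform entries in `Fin p` and read an entry as `1`
exactly when it is `0`. For `p` columns `S` and `c ∈ S`, a row is an identity row for `c` with
probability `q = (p-1)^(p-1)/p^p ≥ 1/(e p)`, because `(1 + 1/(p-1))^(p-1) ≤ e`. The union bound
over the `C(n,p)·p` pairs `(S, c)` leaves a selector once `C(n,p)·p·(1-q)^m < 1`, and since
`1 - q ≤ exp(-1/(e p))` this holds for every `m > e p log(C(n,p)·p)`. As
`log(C(n,p)·p) ≤ p log n + log p`, some such `m` is at most `e p² ln(n/p)·(1+o(1))`, and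
`ln x = log₂ x / log₂ e`.
-/

open Finset

open Filter Real

section IsolatingRows

variable {n : ℕ} (a : ℕ) [NeZero a]

def isolatingRows (S : Finset (Fin n)) (c : Fin n) : Finset (Fin n → Fin a) :=
  Fintype.piFinset fun c' => if c' = c then {0} else if c' ∈ S then {0}ᶜ else univ

variable {a}

lemma card_isolatingRows {S : Finset (Fin n)} {c : Fin n} (hc : c ∈ S) :
    #(isolatingRows a S c) = (a - 1) ^ (#S - 1) * a ^ (n - #S) := by
  rw [isolatingRows, Fintype.card_piFinset, ← prod_mul_prod_compl S, ← mul_prod_erase S _ hc,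
    prod_congr (s₁ := S.erase c) rfl (g := fun _ => a - 1) fun c' hc' => ?inS,
    prod_congr (s₁ := Sᶜ) rfl (g := fun _ => a) fun c' hc' => ?outS]
  · simp [card_erase_of_mem hc, card_compl]
  case inS => simp [ne_of_mem_erase hc', mem_of_mem_erase hc', card_compl]
  case outS =>
    have hc'S := mem_compl.1 hc'
    simp [hc'S, show c' ≠ c by rintro rfl; exact hc'S hc]

lemma hasIdRow_of_mem_isolatingRows {m : ℕ} {A : Fin m → Fin n → Fin a} {S : Finset (Fin n)}
    {c : Fin n} {i : Fin m} (h : A i ∈ isolatingRows a S c) :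
    HasIdRow (fun i c => decide (A i c = 0)) S c := by
  simp only [isolatingRows, Fintype.mem_piFinset] at h
  refine ⟨i, by simpa using h c, fun c' hc' hne => ?_⟩
  simpa [hne, hc'] using h c'

theorem exists_isSelector_of_card_lt {m p : ℕ}
    (h : n.choose p * p * (a ^ n - (a - 1) ^ (p - 1) * a ^ (n - p)) ^ m < (a ^ n) ^ m) :
    ∃ M : Fin m → Fin n → Bool, IsSelector M p p := by
  classical
  set bad := (powersetCard p univ).biUnion fun S => S.biUnion fun c =>
    Fintype.piFinset fun _ : Fin m => (isolatingRows a S c)ᶜ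
  have hbad : #bad < #(univ : Finset (Fin m → Fin n → Fin a)) := calc
    #bad ≤ ∑ S ∈ powersetCard p univ, ∑ c ∈ S,
        #(Fintype.piFinset fun _ : Fin m => (isolatingRows a S c)ᶜ) :=
      card_biUnion_le.trans (sum_le_sum fun _ _ => card_biUnion_le)
    _ = ∑ S ∈ powersetCard p (univ : Finset (Fin n)),
        p * (a ^ n - (a - 1) ^ (p - 1) * a ^ (n - p)) ^ m := by
      refine sum_congr rfl fun S hS => ?_
      rw [← (mem_powersetCard.1 hS).2, ← smul_eq_mul, ← sum_const]
      refine sum_congr rfl fun c hc => ?_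
      rw [Fintype.card_piFinset, card_compl, card_isolatingRows hc]
      simp
    _ < _ := by simpa [card_powersetCard, mul_assoc] using h
  obtain ⟨A, -, hA⟩ := exists_mem_notMem_of_card_lt_card hbad
  refine ⟨fun i c => decide (A i c = 0), fun S hS => ?_⟩
  rw [filter_true_of_mem fun c hc => ?_, hS]
  have hgood : A ∉ Fintype.piFinset fun _ : Fin m => (isolatingRows a S c)ᶜ := fun h =>
    hA (mem_biUnion.2 ⟨S, mem_powersetCard_univ.2 hS, mem_biUnion.2 ⟨c, hc, h⟩⟩)
  simp only [Fintype.mem_piFinset, mem_compl, not_forall, not_not] at hgood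
  obtain ⟨i, hi⟩ := hgood
  exact hasIdRow_of_mem_isolatingRows hi

end IsolatingRows

lemma add_one_pow_le_exp_mul_pow (k : ℕ) : ((k : ℝ) + 1) ^ k ≤ exp 1 * (k : ℝ) ^ k := by
  rcases k.eq_zero_or_pos with rfl | hk
  · simp
  calc ((k : ℝ) + 1) ^ k = (1 + (k : ℝ)⁻¹) ^ k * (k : ℝ) ^ k := by
        rw [← mul_pow]; congr 1; field_simp
    _ ≤ exp 1 * (k : ℝ) ^ k := by gcongr; exact one_add_inv_pow_le_exp

lemma cast_pow_sub_le_pow_mul_exp {n p : ℕ} (hp : 1 ≤ p) (hpn : p ≤ n) :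
    ((p ^ n - (p - 1) ^ (p - 1) * p ^ (n - p) : ℕ) : ℝ) ≤
      p ^ n * exp (-(exp 1 * p)⁻¹) := by
  obtain ⟨k, rfl⟩ := Nat.exists_eq_add_of_le' hp
  have hsplit : ∀ {R : Type} [CommMonoid R] (x : R),
      x ^ n = x ^ k * x * x ^ (n - (k + 1)) := by
    intro R _ x; rw [← pow_succ, ← pow_add]; congr 1; omega
  have hle : k ^ k * (k + 1) ^ (n - (k + 1)) ≤ (k + 1) ^ n := by
    rw [hsplit, mul_right_comm]
    exact (Nat.mul_le_mul_right _ (Nat.pow_le_pow_left (by omega) k)).trans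
      (Nat.le_mul_of_pos_right _ (by omega))
  have hexp : ((k : ℝ) + 1) ^ n ≤ exp 1 * (k + 1) * (k ^ k * (k + 1) ^ (n - (k + 1))) := by
    rw [hsplit]
    calc ((k : ℝ) + 1) ^ k * (k + 1) * (k + 1) ^ (n - (k + 1))
        ≤ exp 1 * k ^ k * (k + 1) * (k + 1) ^ (n - (k + 1)) := by
          gcongr; exact add_one_pow_le_exp_mul_pow k
      _ = _ := by ring
  have hdiv : ((k : ℝ) + 1) ^ n / (exp 1 * (k + 1)) ≤ k ^ k * (k + 1) ^ (n - (k + 1)) := by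
    rw [div_le_iff₀ (by positivity), mul_comm]; exact hexp
  rw [Nat.add_sub_cancel, Nat.cast_sub hle]
  push_cast
  calc ((k : ℝ) + 1) ^ n - k ^ k * (k + 1) ^ (n - (k + 1))
      ≤ (k + 1) ^ n * (1 - (exp 1 * (k + 1))⁻¹) := by
        rw [mul_one_sub, ← div_eq_mul_inv]; linarith
    _ ≤ (k + 1) ^ n * exp (-(exp 1 * (k + 1))⁻¹) := by gcongr; exact one_sub_le_exp_neg _

lemma log_choose_mul_le {n p : ℕ} (hp : 0 < p) (hpn : p ≤ n) :
    log (n.choose p * p) ≤ p * log n + log p := by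
  have hn : 0 < n := hp.trans_le hpn
  have hchoose : 0 < n.choose p := Nat.choose_pos hpn
  calc log (n.choose p * p) ≤ log ((n : ℝ) ^ p * p) := by
        gcongr; exact_mod_cast Nat.choose_le_pow n p
    _ = p * log n + log p := by rw [log_mul (by positivity) (by positivity), log_pow]

theorem exists_isSelector_of_exp_mul_log_lt {m n p : ℕ} (hp : 1 ≤ p)
    (hm : exp 1 * p * log (n.choose p * p) < m) :
    ∃ M : Fin m → Fin n → Bool, IsSelector M p p := by
  have : NeZero p := ⟨by omega⟩
  apply exists_isSelector_of_card_lt (a := p)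
  rcases lt_or_ge n p with hnp | hpn
  · simp only [Nat.choose_eq_zero_of_lt hnp, zero_mul]
    positivity
  set D : ℝ := n.choose p * p
  have hD : 0 < D := by have := Nat.choose_pos hpn; positivity
  have hDexp : D * exp (-(m / (exp 1 * p))) < 1 := by
    rw [← exp_log hD, ← exp_add, exp_lt_one_iff, add_neg_lt_iff_lt_add, zero_add,
      lt_div_iff₀' (by positivity)]
    exact hm
  rw [← Nat.cast_lt (α := ℝ)]
  calc ((n.choose p * p * (p ^ n - (p - 1) ^ (p - 1) * p ^ (n - p)) ^ m : ℕ) : ℝ)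
      = D * ((p ^ n - (p - 1) ^ (p - 1) * p ^ (n - p) : ℕ) : ℝ) ^ m := by push_cast; ring
    _ ≤ D * (p ^ n * exp (-(exp 1 * p)⁻¹)) ^ m := by
        gcongr; exact cast_pow_sub_le_pow_mul_exp hp hpn
    _ = D * exp (-(m / (exp 1 * p))) * ((p : ℝ) ^ n) ^ m := by
        rw [mul_pow, ← exp_nat_mul]; ring_nf
    _ < 1 * ((p : ℝ) ^ n) ^ m := by gcongr
    _ = (((p ^ n) ^ m : ℕ) : ℝ) := by push_cast; ring

lemma tendsto_add_div_add_of_tendsto_atTop {α : Type*} {l : Filter α} {f : α → ℝ}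
    (hf : Tendsto f l atTop) (b c : ℝ) :
    Tendsto (fun x => (f x + b) / (f x + c)) l (nhds 1) := by
  have h : Tendsto (fun x => 1 + (b - c) / (f x + c)) l (nhds 1) := by
    simpa using tendsto_const_nhds.add
      (tendsto_const_nhds.div_atTop (tendsto_atTop_add_const_right _ c hf))
  refine h.congr' ?_
  filter_upwards [hf.eventually_gt_atTop (-c)] with x hx
  have : f x + c ≠ 0 := by linarith
  field_simp
  ring

/-- there exists a `(p, p, n)`-selector (a `(p-1)`-superimposed code) of
size `m = (e·p²/log₂ e)·log₂(n/p)·(1+o(1))` (as `n → ∞`). -/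
theorem stmt16 (p : ℕ) (hp : 1 ≤ p) :
    ∃ ε : ℕ → ℝ, Filter.Tendsto ε Filter.atTop (nhds 0) ∧
      ∀ n : ℕ, p < n →
        ∃ (m : ℕ) (M : Fin m → Fin n → Bool), IsSelector M p p ∧
          (m : ℝ) ≤ Real.exp 1 * (p : ℝ) ^ 2 / Real.logb 2 (Real.exp 1) *
            Real.logb 2 ((n : ℝ) / p) * (1 + ε n) := by
  set a : ℝ := exp 1 * p ^ 2
  set U : ℕ → ℝ := fun n => a * log n + (exp 1 * p * log p + 1)
  set K : ℕ → ℝ := fun n => a * log n + -(a * log p)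
  refine ⟨fun n => U n / K n - 1, ?_, fun n hn => ?_⟩
  · have hlog : Tendsto (fun n : ℕ => a * log n) atTop atTop :=
      (tendsto_log_atTop.comp tendsto_natCast_atTop_atTop).const_mul_atTop (by positivity)
    simpa using (tendsto_add_div_add_of_tendsto_atTop hlog _ _).sub_const 1
  obtain ⟨M, hM⟩ := exists_isSelector_of_exp_mul_log_lt
    (m := ⌊exp 1 * p * log (n.choose p * p)⌋₊ + 1) hp
    (by exact_mod_cast Nat.lt_floor_add_one _)
  refine ⟨_, M, hM, ?_⟩
  have hK : K n = exp 1 * p ^ 2 / logb 2 (exp 1) * logb 2 (n / p) := by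
    simp only [K, a, logb, log_exp]
    rw [log_div (Nat.cast_ne_zero.2 (by omega)) (by positivity)]
    field_simp
    ring
  have hKpos : 0 < K n := by
    have hlog : log p < log n := log_lt_log (by positivity) (by exact_mod_cast hn)
    have := mul_lt_mul_of_pos_left hlog (show 0 < a by positivity)
    simp only [K]; linarith
  rw [← hK, add_sub_cancel, mul_div_cancel₀ _ hKpos.ne']
  calc ((⌊exp 1 * p * log (n.choose p * p)⌋₊ + 1 : ℕ) : ℝ)
      ≤ exp 1 * p * log (n.choose p * p) + 1 := by
        have hlog : 0 ≤ log (n.choose p * p) := by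
          exact_mod_cast log_natCast_nonneg (n.choose p * p)
        push_cast; gcongr; exact Nat.floor_le (by positivity)
    _ ≤ exp 1 * p * (p * log n + log p) + 1 := by gcongr; exact log_choose_mul_le hp hn.le
    _ = U n := by simp only [U, a]; ring
end

section
/- Let M be a (p+e₀, v, n)-super-selector where v_i = i − min{e₀, e₁} + 1 for each i. Then for any set P of at most p columns (the 'positives'), letting a_P be the Boolean OR of the columns of P and P' the set of all columns covered by a_P: P ⊆ P', |P' \ P| ≤ e₀, and there is a subset P'' ⊆ P of columns identifiable from a_P with |P \ P''| ≤ e₁. -/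
open Finset

/-- let `M` be a `(p+e₀, v, n)`-super-selector with
`v i = i - min e₀ e₁ + 1`. Then for any set `P` of at most `p` columns, with `a_P` the
OR of the columns of `P` and `P'` the set of all columns covered by `a_P`: `P ⊆ P'`,
`|P' \ P| ≤ e₀`, and some `P'' ⊆ P` of identifiable columns has `|P \ P''| ≤ e₁`. -/
theorem stmt18 {m n p e₀ e₁ : ℕ} (hp : 1 ≤ p) (hpn : p + e₀ ≤ n)
    (v : ℕ → ℕ) (hv : ∀ i : ℕ, v i = i - min e₀ e₁ + 1)
    (M : Fin m → Fin n → Bool) (hM : IsSuperSelector M (p + e₀) v)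
    (P : Finset (Fin n)) (hP : P.card ≤ p) :
    letI P' : Finset (Fin n) := Finset.univ.filter (Covered M (orCols M P))
    P ⊆ P' ∧ (P' \ P).card ≤ e₀ ∧
      ∃ P'' ⊆ P,
        (∀ c ∈ P'', ∃ i : Fin m, M i c = true ∧
          ∀ c' ∈ P', c' ≠ c → M i c' = false) ∧
        (P \ P'').card ≤ e₁ := by
  set P' : Finset (Fin n) := Finset.univ.filter (Covered M (orCols M P)) with hP'def
  -- columns of P' are covered
  have hcovP' : ∀ c ∈ P', Covered M (orCols M P) c := by
    intro c hc
    rw [hP'def, Finset.mem_filter] at hc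
    exact hc.2
  -- P ⊆ P'
  have hPP' : P ⊆ P' := by
    intro c hc
    rw [hP'def, Finset.mem_filter]
    refine ⟨Finset.mem_univ _, fun i hi => ?_⟩
    have hle : true ≤ P.sup fun d => M i d := by
      simpa [hi] using Finset.le_sup (f := fun d => M i d) hc
    unfold orCols
    exact top_le_iff.mp hle
  -- a covered column outside P has no id row in any S with P ⊆ S
  have hnoid : ∀ (S : Finset (Fin n)) (c : Fin n), P ⊆ S → c ∉ P →
      Covered M (orCols M P) c → ¬ HasIdRow M S c := by
    rintro S c hPS hcP hcov ⟨i, hic, hall⟩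
    have hai : orCols M P i = true := hcov i hic
    have hfalse : P.sup (fun d => M i d) = ⊥ := by
      rw [Finset.sup_eq_bot_iff]
      intro d hd
      exact hall d (hPS hd) (fun h => hcP (h ▸ hd))
    unfold orCols at hai
    rw [hfalse] at hai
    exact absurd hai (by simp)
  by_cases hmin : min e₀ e₁ = 0
  · -- the hypothesis is contradictory when min e₀ e₁ = 0
    exfalso
    set c0 : Fin n := ⟨0, by omega⟩ with hc0
    have hsel := hM 1 le_rfl (by omega) {c0} (Finset.card_singleton _)
    have hle := Finset.card_filter_le ({c0} : Finset (Fin n)) (HasIdRow M {c0})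
    rw [hv, hmin] at hsel
    rw [Finset.card_singleton] at hle
    omega
  · have hmin1 : 1 ≤ min e₀ e₁ := Nat.one_le_iff_ne_zero.mpr hmin
    have hminle₀ : min e₀ e₁ ≤ e₀ := Nat.min_le_left _ _
    have hminle₁ : min e₀ e₁ ≤ e₁ := Nat.min_le_right _ _
    -- Part 2
    have h2 : (P' \ P).card ≤ e₀ := by
      by_contra h
      push_neg at h
      obtain ⟨Q, hQsub, hQcard⟩ := Finset.exists_subset_card_eq (s := P' \ P) (n := e₀) (by omega)
      have hdisj : Disjoint P Q := by
        rw [Finset.disjoint_left]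
        intro c hcP hcQ
        exact (Finset.mem_sdiff.mp (hQsub hcQ)).2 hcP
      have hScard : (P ∪ Q).card = P.card + e₀ := by
        rw [Finset.card_union_of_disjoint hdisj, hQcard]
      have hsel := hM (P.card + e₀) (by omega) (by omega) (P ∪ Q) hScard
      have hsub : (P ∪ Q).filter (HasIdRow M (P ∪ Q)) ⊆ P := by
        intro c hc
        rw [Finset.mem_filter] at hc
        by_contra hcP
        have hcQ : c ∈ Q := (Finset.mem_union.mp hc.1).resolve_left hcP
        have hcP' : c ∈ P' := (Finset.mem_sdiff.mp (hQsub hcQ)).1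
        exact hnoid (P ∪ Q) c Finset.subset_union_left hcP (hcovP' c hcP') hc.2
      have hcard := Finset.card_le_card hsub
      rw [hv] at hsel
      omega
    refine ⟨hPP', h2, ?_⟩
    -- Part 3
    have hP'card : P'.card = (P' \ P).card + P.card :=
      (Finset.card_sdiff_add_card_eq_card hPP').symm
    set P'' : Finset (Fin n) := P'.filter (HasIdRow M P') with hP''def
    have hP''P : P'' ⊆ P := by
      intro c hc
      rw [hP''def, Finset.mem_filter] at hc
      by_contra hcP
      exact hnoid P' c hPP' hcP (hcovP' c hc.1) hc.2
    refine ⟨P'', hP''P, ?_, ?_⟩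
    · intro c hc
      rw [hP''def, Finset.mem_filter] at hc
      exact hc.2
    · by_cases hP0 : P'.card = 0
      · have : P.card ≤ P'.card := Finset.card_le_card hPP'
        have h1 : (P \ P'').card ≤ P.card := Finset.card_le_card (Finset.sdiff_subset)
        omega
      · have hsel := hM P'.card (by omega) (by omega) P' rfl
        rw [hv, ← hP''def] at hsel
        have hcard : (P \ P'').card = P.card - P''.card := Finset.card_sdiff_of_subset hP''P
        have hle : P''.card ≤ P.card := Finset.card_le_card hP''P
        omega
end
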